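/- Let u : J → ℝ be a twice differentiable, nowhere-vanishing solution of u'' − u'²/(2u) + 2uu' + u³/2 + 1/(2u) = 0 on an interval J. Then: (a) on every subinterval where |(u² + u' + 1)/(√2·u)| < 1, the function I₁(x) = −(1/2)·( x − √2·artanh( (u(x)² + u'(x) + 1)/(√2·u(x)) ) ) has zero derivative; (b) on all of J, the function I₂(x) = (1/2)·( x + √2·arctan( (u(x)² + u'(x) − 1)/(√2·u(x)) ) ) has zero derivative. Hence I₁ and I₂ are first integrals of the equation. -/

import Mathlib

/-! Along a nonvanishing solution, `w = (u² + u' + c)/(√2 u)` with `c = ±1` satisfies the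
Riccati equation `w' = (c - w²)/√2`, which is separable: `(artanh w)' = 1/√2` for `c = 1`
and `(arctan w)' = -1/√2` for `c = -1`. -/

open Real

noncomputable def artanh (y : ℝ) : ℝ := (1 / 2) * Real.log ((1 + y) / (1 - y))

theorem HasDerivAt.artanh {f : ℝ → ℝ} {f' x : ℝ} (hf : HasDerivAt f f' x) (h : |f x| < 1) :
    HasDerivAt (fun t => _root_.artanh (f t)) (f' / (1 - f x ^ 2)) x := by
  obtain ⟨hlt, hgt⟩ := abs_lt.mp h
  have hpos : 0 < 1 - f x := by linarith
  have hpos' : 0 < 1 + f x := by linarith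
  have hquot : HasDerivAt (fun t => (1 + f t) / (1 - f t))
      (((0 + f') * (1 - f x) - (1 + f x) * (0 - f')) / (1 - f x) ^ 2) x :=
    ((hasDerivAt_const x 1).add hf).div ((hasDerivAt_const x 1).sub hf) hpos.ne'
  refine ((hquot.log (div_pos hpos' hpos).ne').const_mul (1 / 2)).congr_deriv ?_
  have : 1 - f x ^ 2 ≠ 0 := by nlinarith
  field_simp
  ring

theorem hasDerivAt_riccati {u u' u'' : ℝ → ℝ} {x c : ℝ} (hc : c ^ 2 = 1)
    (hu : HasDerivAt u (u' x) x) (hu' : HasDerivAt u' (u'' x) x) (hu0 : u x ≠ 0)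
    (hode : u'' x - (u' x) ^ 2 / (2 * u x) + 2 * u x * u' x + (u x) ^ 3 / 2
      + 1 / (2 * u x) = 0) :
    HasDerivAt (fun t => (u t ^ 2 + u' t + c) / (√2 * u t))
      ((c - ((u x ^ 2 + u' x + c) / (√2 * u x)) ^ 2) / √2) x := by
  have hs : √2 ^ 2 = 2 := sq_sqrt (by norm_num)
  have hs0 : √2 ≠ 0 := by positivity
  have hw : HasDerivAt (fun t => (u t ^ 2 + u' t + c) / (√2 * u t))
      (((2 * u x ^ 1 * u' x + u'' x + 0) * (√2 * u x) - (u x ^ 2 + u' x + c) * (√2 * u' x))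
        / (√2 * u x) ^ 2) x :=
    (((hu.pow 2).add hu').add (hasDerivAt_const x c)).div (hu.const_mul √2)
      (mul_ne_zero hs0 hu0)
  refine hw.congr_deriv ?_
  field_simp at hode ⊢
  rw [hs]
  linear_combination hode + hc

/-- along any nowhere-vanishing solution `u` of
`u'' − u'²/(2u) + 2uu' + u³/2 + 1/(2u) = 0`:
(a) wherever `|(u² + u' + 1)/(√2·u)| < 1`, the function
`I₁ = −(1/2)(x − √2·artanh((u² + u' + 1)/(√2·u)))` has zero derivative;
(b) everywhere on `J`, the function
`I₂ = (1/2)(x + √2·arctan((u² + u' − 1)/(√2·u)))` has zero derivative.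
Hence `I₁` and `I₂` are first integrals of the equation. -/
theorem statement17 (J : Set ℝ) (u u' u'' : ℝ → ℝ)
    (hu : ∀ x ∈ J, HasDerivAt u (u' x) x)
    (hu' : ∀ x ∈ J, HasDerivAt u' (u'' x) x)
    (hu0 : ∀ x ∈ J, u x ≠ 0)
    (hode : ∀ x ∈ J,
      u'' x - (u' x) ^ 2 / (2 * u x) + 2 * u x * u' x + (u x) ^ 3 / 2
        + 1 / (2 * u x) = 0) :
    (∀ x ∈ J, |((u x) ^ 2 + u' x + 1) / (Real.sqrt 2 * u x)| < 1 →
      HasDerivAt (fun t =>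
        -(1 / 2) * (t - Real.sqrt 2 *
          _root_.artanh (((u t) ^ 2 + u' t + 1) / (Real.sqrt 2 * u t)))) 0 x) ∧
    (∀ x ∈ J,
      HasDerivAt (fun t =>
        (1 / 2) * (t + Real.sqrt 2 *
          Real.arctan (((u t) ^ 2 + u' t - 1) / (Real.sqrt 2 * u t)))) 0 x) := by
  refine ⟨fun x hx hbound => ?_, fun x hx => ?_⟩
  · have hartanh :=
      (hasDerivAt_riccati (one_pow 2) (hu x hx) (hu' x hx) (hu0 x hx) (hode x hx)).artanh hbound
    refine (((hasDerivAt_id' x).sub (hartanh.const_mul √2)).const_mul (-(1 / 2))).congr_deriv ?_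
    generalize (u x ^ 2 + u' x + 1) / (√2 * u x) = w at hbound ⊢
    have : 1 - w ^ 2 ≠ 0 := by nlinarith [sq_abs w, abs_nonneg w]
    field_simp
    ring
  · have harctan :=
      (hasDerivAt_riccati neg_one_sq (hu x hx) (hu' x hx) (hu0 x hx) (hode x hx)).arctan
    simp only [← sub_eq_add_neg] at harctan
    refine (((hasDerivAt_id' x).add (harctan.const_mul √2)).const_mul (1 / 2)).congr_deriv ?_
    generalize (u x ^ 2 + u' x - 1) / (√2 * u x) = w
    field_simp
    ring
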